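/- arXiv:2403.01025 — 9 statements merged into one kernel-verified Lean document; each statement's English description precedes it below -/
import Mathlib

section
/- Let ℐ be an interpreted system satisfying choice determinism, local state introspection, perfect input recall, second-depth knowledge stability, the second depth broadcaster condition, and the largest mutually-known choice condition for some value selection strategy f. Then for every run σ ∈ Σ there exists a value v ∈ 𝕍 such that for every agent b ∈ 𝒜, (ℐ,σ) ⊨ ◇ □ choose_b(v). -/
/-- An interpreted system over agents `A`, values `V`, and global states `G`:
an indistinguishability equivalence relation per agent, a nonempty set of runs
covering all global states, and valuations for the atoms `init_a(v)` and
`choose_a(v)`. -/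
structure IntSystem (A V G : Type) where
  R : A → G → G → Prop
  R_equiv : ∀ a : A, Equivalence (R a)
  Runs : Set (ℕ → G)
  runs_nonempty : Runs.Nonempty
  states_reachable : ∀ g : G, ∃ σ ∈ Runs, ∃ t : ℕ, σ t = g
  initV : A → V → Set G
  chooseV : A → V → Set G

/-- Temporal propositions: the meaning of a formula, as a predicate on (run, time). -/
abbrev TProp (G : Type) := (ℕ → G) → ℕ → Prop

variable {A V G : Type}

/-- Meaning of the atom `init_a(v)`. -/
def initP (I : IntSystem A V G) (a : A) (v : V) : TProp G := fun σ t => σ t ∈ I.initV a v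

/-- Meaning of the atom `choose_a(v)`. -/
def chooseP (I : IntSystem A V G) (a : A) (v : V) : TProp G := fun σ t => σ t ∈ I.chooseV a v

/-- Knowledge operator `K_a`. -/
def Kn (I : IntSystem A V G) (a : A) (P : TProp G) : TProp G :=
  fun σ t => ∀ σ' ∈ I.Runs, ∀ t' : ℕ, I.R a (σ t) (σ' t') → P σ' t'

/-- Mutual knowledge `E φ := ⋀_{a ∈ 𝒜} K_a φ`. -/
def Ek (I : IntSystem A V G) (P : TProp G) : TProp G := fun σ t => ∀ a : A, Kn I a P σ t

/-- Eventually `◇`. -/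
def Diam (P : TProp G) : TProp G := fun σ t => ∃ t' ≥ t, P σ t'

/-- Always `□ φ := ¬ ◇ ¬ φ`. -/
def Box (P : TProp G) : TProp G := fun σ t => ¬ Diam (fun σ' t' => ¬ P σ' t') σ t

/-- `decide_a(v) := □ choose_a(v)`. -/
def decideP (I : IntSystem A V G) (a : A) (v : V) : TProp G := Box (chooseP I a v)

/-- `(ℐ,σ) ⊨ φ` : satisfaction at all times of the run. -/
def ValidAt (σ : ℕ → G) (P : TProp G) : Prop := ∀ t : ℕ, P σ t

/-- `ℐ ⊨ φ` : satisfaction at all runs and times. -/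
def Valid (I : IntSystem A V G) (P : TProp G) : Prop := ∀ σ ∈ I.Runs, ∀ t : ℕ, P σ t

/-- Input values are stable along every run. -/
def InputStable (I : IntSystem A V G) : Prop :=
  ∀ σ ∈ I.Runs, ∀ (a : A) (v : V),
    ValidAt σ (initP I a v) ∨ ValidAt σ (fun σ' t => ¬ initP I a v σ' t)

/-- A primitive value formula `⋀_{a ∈ X} init_a(v_a)` (an element of `Φ`),
given by a nonempty domain `X ⊆ 𝒜` and values `v_a`. -/
structure PrimForm (A V : Type) where
  dom : Finset A
  dom_nonempty : dom.Nonempty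
  val : A → V

/-- Satisfaction of a primitive value formula. -/
def PrimForm.sat (I : IntSystem A V G) (φ : PrimForm A V) : TProp G :=
  fun σ t => ∀ a ∈ φ.dom, σ t ∈ I.initV a (φ.val a)

/-- The implication `φ → φ'` (between primitive value formulas) is valid in `ℐ`. -/
def ValidImp (I : IntSystem A V G) (φ φ' : PrimForm A V) : Prop :=
  Valid I (fun σ t => PrimForm.sat I φ σ t → PrimForm.sat I φ' σ t)

/-- The biconditional `φ ↔ φ'` (between primitive value formulas) is valid in `ℐ`. -/
def ValidIff (I : IntSystem A V G) (φ φ' : PrimForm A V) : Prop :=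
  Valid I (fun σ t => PrimForm.sat I φ σ t ↔ PrimForm.sat I φ' σ t)

/-- Satisfaction of the conjunction of a set of `init` atoms (atoms given as pairs `(b,v)`). -/
def conjSat (I : IntSystem A V G) (S : Set (A × V)) : TProp G :=
  fun σ t => ∀ p ∈ S, σ t ∈ I.initV p.1 p.2

/-- Choice determinism: at any point, an agent chooses at most one value. -/
def ChoiceDeterminism (I : IntSystem A V G) : Prop :=
  Valid I (fun σ t => ∀ (a : A) (v : V),
    chooseP I a v σ t → ∀ w : V, w ≠ v → ¬ chooseP I a w σ t)

/-- Local state introspection: agents know their own initial value and have exactly one. -/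
def LocalIntrospection (I : IntSystem A V G) : Prop :=
  (Valid I (fun σ t => ∀ (a : A) (v : V), initP I a v σ t → Kn I a (initP I a v) σ t)) ∧
  (Valid I (fun σ t => ∀ a : A, ∃ v : V,
    initP I a v σ t ∧ ∀ w : V, w ≠ v → ¬ initP I a w σ t))

/-- Perfect input recall: `K_a φ → □ K_a φ` for all `φ ∈ Φ`. -/
def PerfectRecall (I : IntSystem A V G) : Prop :=
  Valid I (fun σ t => ∀ (a : A) (φ : PrimForm A V),
    Kn I a (PrimForm.sat I φ) σ t → Box (Kn I a (PrimForm.sat I φ)) σ t)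

/-- Second-depth knowledge stability: `K_a E φ → □ K_a E φ` for all `φ ∈ Φ`. -/
def SecondDepthStability (I : IntSystem A V G) : Prop :=
  Valid I (fun σ t => ∀ (a : A) (φ : PrimForm A V),
    Kn I a (Ek I (PrimForm.sat I φ)) σ t → Box (Kn I a (Ek I (PrimForm.sat I φ))) σ t)

/-- The second depth broadcaster condition: `ℐ ⊨ ⋁_a ⋀_{φ ∈ Φ} (K_a φ → ◇ E E φ)`. -/
def Broadcaster (I : IntSystem A V G) : Prop :=
  Valid I (fun σ t => ∃ a : A, ∀ φ : PrimForm A V,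
    Kn I a (PrimForm.sat I φ) σ t → Diam (Ek I (Ek I (PrimForm.sat I φ))) σ t)

/-- `f : Φ → 𝕍` is a value selection strategy: `ℐ ⊨ φ → ⋁_{a ∈ 𝒜} init_a(f(φ))`. -/
def ValueStrategy (I : IntSystem A V G) (f : PrimForm A V → V) : Prop :=
  ∀ φ : PrimForm A V,
    Valid I (fun σ t => PrimForm.sat I φ σ t → ∃ a : A, initP I a (f φ) σ t)

/-- `φ` is a current primitive knowledge formula `φ̄_{(a,σ,t)}`:
`(ℐ,σ,t) ⊨ K_a φ` and `φ` is the strongest such formula in `Φ`. -/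
def IsCPK (I : IntSystem A V G) (a : A) (σ : ℕ → G) (t : ℕ) (φ : PrimForm A V) : Prop :=
  Kn I a (PrimForm.sat I φ) σ t ∧
  ∀ φ' : PrimForm A V, Kn I a (PrimForm.sat I φ') σ t → ValidImp I φ φ'

/-- `φ` is a primitive knowledge limit `φ̄_{(a,σ)}`:
`(ℐ,σ) ⊨ ◇ K_a φ` and `φ` implies every `φ' ∈ Φ` that `a` ever knows in `σ`. -/
def IsPKLim (I : IntSystem A V G) (a : A) (σ : ℕ → G) (φ : PrimForm A V) : Prop :=
  ValidAt σ (Diam (Kn I a (PrimForm.sat I φ))) ∧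
  ∀ φ' : PrimForm A V, (∃ t : ℕ, Kn I a (PrimForm.sat I φ') σ t) → ValidImp I φ φ'

/-- `φ` is a current mutually-known primitive knowledge formula `φ*_{(a,σ,t)}`:
`(ℐ,σ,t) ⊨ K_a E φ` and `φ` is the strongest such formula in `Φ`. -/
def IsMKPK (I : IntSystem A V G) (a : A) (σ : ℕ → G) (t : ℕ) (φ : PrimForm A V) : Prop :=
  Kn I a (Ek I (PrimForm.sat I φ)) σ t ∧
  ∀ φ' : PrimForm A V, Kn I a (Ek I (PrimForm.sat I φ')) σ t → ValidImp I φ φ'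

/-- The largest mutually-known choice condition for a strategy `f`:
whenever `φ*_{(a,σ,t)}` exists, agent `a` chooses `f(φ*_{(a,σ,t)})`. -/
def LargestMKChoice (I : IntSystem A V G) (f : PrimForm A V → V) : Prop :=
  ∀ σ ∈ I.Runs, ∀ (t : ℕ) (a : A) (φs : PrimForm A V),
    IsMKPK I a σ t φs → chooseP I a (f φs) σ t

/-! ### Auxiliary material for the proof -/

/-- Knowledge is monotone under pointwise implication. -/
lemma Kn_mono {I : IntSystem A V G} {a : A} {P Q : TProp G}
    (h : ∀ σ t, P σ t → Q σ t) {σ : ℕ → G} {t : ℕ} (hK : Kn I a P σ t) :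
    Kn I a Q σ t :=
  fun σ' hσ' t' hR => h _ _ (hK σ' hσ' t' hR)

/-- The primitive formula `init_b(v)`. -/
def primOf (b : A) (v : V) : PrimForm A V :=
  ⟨{b}, Finset.singleton_nonempty b, fun _ => v⟩

lemma sat_primOf (I : IntSystem A V G) (b : A) (v : V) (σ : ℕ → G) (t : ℕ) :
    PrimForm.sat I (primOf b v) σ t ↔ σ t ∈ I.initV b v := by
  simp [PrimForm.sat, primOf]

/-- The semantic reduction of a primitive formula. -/
noncomputable def redPF (φ : PrimForm A V) : A → Option V := fun a =>
  @ite _ (a ∈ φ.dom) (Classical.propDecidable _) (some (φ.val a)) none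

lemma sat_eq_of_red_eq (I : IntSystem A V G) {φ φ' : PrimForm A V}
    (h : redPF φ = redPF φ') : PrimForm.sat I φ = PrimForm.sat I φ' := by
  have key : ∀ ψ : PrimForm A V, ∀ σ : ℕ → G, ∀ t : ℕ,
      PrimForm.sat I ψ σ t ↔ ∀ b v, redPF ψ b = some v → σ t ∈ I.initV b v := by
    intro ψ σ t
    constructor
    · intro H b v hv
      unfold redPF at hv
      split_ifs at hv with hb
      · obtain rfl : ψ.val b = v := Option.some.inj hv
        exact H b hb
    · intro H b hb
      refine H b (ψ.val b) ?_
      unfold redPF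
      rw [if_pos hb]
  funext σ t
  rw [eq_iff_iff, key, key, h]

/-- A monotone family of sets of a finite type admits a final stage containing all stages. -/
lemma exists_bound {X : Type} [Finite X] (S : ℕ → Set X)
    (hmono : ∀ s t, s ≤ t → S s ⊆ S t) : ∃ T, ∀ t, S t ⊆ S T := by
  classical
  haveI := Fintype.ofFinite X
  have h : ∀ g : X, ∃ T, (∃ t, g ∈ S t) → g ∈ S T := by
    intro g
    by_cases h : ∃ t, g ∈ S t
    · exact ⟨h.choose, fun _ => h.choose_spec⟩
    · exact ⟨0, fun h' => absurd h' h⟩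
  choose τ hτ using h
  exact ⟨Finset.univ.sup τ, fun t g hg =>
    hmono _ _ (Finset.le_sup (Finset.mem_univ g)) (hτ g ⟨t, hg⟩)⟩

/-- Under the same assumptions, in every run there is a single value `v`
such that every agent `b` satisfies `(ℐ,σ) ⊨ ◇ □ choose_b(v)`. -/
theorem eventual_common_stable_choice
    {A V G : Type} [Fintype A] [Nonempty A] [Fintype V] [Nonempty V]
    (I : IntSystem A V G) (f : PrimForm A V → V)
    (hstable : InputStable I)
    (hcd : ChoiceDeterminism I)
    (hli : LocalIntrospection I)
    (hpr : PerfectRecall I)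
    (hsd : SecondDepthStability I)
    (hbc : Broadcaster I)
    (hf : ValueStrategy I f)
    (hlc : LargestMKChoice I f) :
    ∀ σ ∈ I.Runs, ∃ v : V, ∀ b : A, ValidAt σ (Diam (Box (chooseP I b v))) := by
  classical
  intro σ hσ
  -- A broadcaster agent at infinitely many times
  have hpig : ∃ a : A, ∀ N : ℕ, ∃ t ≥ N, ∀ φ : PrimForm A V,
      Kn I a (PrimForm.sat I φ) σ t → Diam (Ek I (Ek I (PrimForm.sat I φ))) σ t := by
    by_contra h
    push_neg at h
    choose N hN using h
    obtain ⟨a, ha⟩ := hbc σ hσ (Finset.univ.sup N)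
    obtain ⟨φ, hK, hnd⟩ := hN a _ (Finset.le_sup (Finset.mem_univ a))
    exact hnd (ha φ hK)
  obtain ⟨a, hainf⟩ := hpig
  -- Stabilization of agent a's primitive knowledge along σ
  set S : ℕ → Set (A → Option V) :=
    fun t => {g | ∃ φ : PrimForm A V, redPF φ = g ∧ Kn I a (PrimForm.sat I φ) σ t} with hS
  have hSmono : ∀ s t, s ≤ t → S s ⊆ S t := by
    rintro s t hst g ⟨φ, hred, hK⟩
    refine ⟨φ, hred, ?_⟩
    have hbox := hpr σ hσ s a φ hK
    by_contra hc
    exact hbox ⟨t, hst, hc⟩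
  obtain ⟨T0, hT0⟩ := exists_bound S hSmono
  obtain ⟨T, hTge, hTbc⟩ := hainf T0
  have hTsub : ∀ t, S t ⊆ S T := fun t => (hT0 t).trans (hSmono T0 T hTge)
  -- The values agent a knows about other agents at time T
  set kv : A → V → Prop :=
    fun b v => Kn I a (PrimForm.sat I (primOf b v)) σ T with hkv
  -- a knows its own value
  have haD : ∃ v, kv a v := by
    obtain ⟨v, hv, -⟩ := hli.2 σ hσ T a
    have hKa : Kn I a (initP I a v) σ T := hli.1 σ hσ T a v hv
    exact ⟨v, Kn_mono (fun σ' t' h => (sat_primOf I a v σ' t').mpr h) hKa⟩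
  -- known values are unique
  have huniq : ∀ b v w, kv b v → kv b w → v = w := by
    intro b v w hv hw
    have h1 : σ T ∈ I.initV b v :=
      (sat_primOf I b v σ T).mp (hv σ hσ T ((I.R_equiv a).refl _))
    have h2 : σ T ∈ I.initV b w :=
      (sat_primOf I b w σ T).mp (hw σ hσ T ((I.R_equiv a).refl _))
    obtain ⟨u, hu, huu⟩ := hli.2 σ hσ T b
    have hv' : v = u := by
      by_contra hne; exact huu v hne h1
    have hw' : w = u := by
      by_contra hne; exact huu w hne h2
    rw [hv', hw']
  -- Construct the current primitive knowledge of a at time T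
  set D : Finset A := Finset.univ.filter (fun b => ∃ v, kv b v) with hD
  set vl : A → V := fun b => if h : ∃ v, kv b v then h.choose else Classical.arbitrary V
    with hvl
  have hvl_spec : ∀ b ∈ D, kv b (vl b) := by
    intro b hb
    rw [hD, Finset.mem_filter] at hb
    rw [hvl]
    simp only [dif_pos hb.2]
    exact hb.2.choose_spec
  set φbar : PrimForm A V := ⟨D, ⟨a, by simp [hD, haD]⟩, vl⟩ with hφbar
  -- a knows φbar at T
  have hKbar : Kn I a (PrimForm.sat I φbar) σ T := by
    intro σ' hσ' t' hR b hb
    have := hvl_spec b hb σ' hσ' t' hR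
    exact (sat_primOf I b (vl b) σ' t').mp this
  -- φbar (pointwise!) implies anything a knows at T
  have hstrong : ∀ φ' : PrimForm A V, Kn I a (PrimForm.sat I φ') σ T →
      ∀ σ'' t'', PrimForm.sat I φbar σ'' t'' → PrimForm.sat I φ' σ'' t'' := by
    intro φ' hK σ'' t'' hsat b hb
    have hkb : kv b (φ'.val b) := by
      refine Kn_mono (fun σ' t' h => ?_) hK
      exact (sat_primOf I b (φ'.val b) σ' t').mpr (h b hb)
    have hbD : b ∈ D := by
      rw [hD, Finset.mem_filter]
      exact ⟨Finset.mem_univ b, ⟨_, hkb⟩⟩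
    have heq : φ'.val b = vl b := huniq b _ _ hkb (hvl_spec b hbD)
    rw [heq]
    exact hsat b hbD
  -- broadcaster: eventually E E φbar
  obtain ⟨t₁, ht₁T, hEE⟩ := hTbc φbar hKbar
  -- second-depth stability: K_b E φbar from t₁ onwards
  have hstab : ∀ b : A, ∀ t, t₁ ≤ t → Kn I b (Ek I (PrimForm.sat I φbar)) σ t := by
    intro b t ht
    have h1 : Kn I b (Ek I (PrimForm.sat I φbar)) σ t₁ := hEE b
    have hbox := hsd σ hσ t₁ b φbar h1
    by_contra hc
    exact hbox ⟨t, ht, hc⟩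
  -- φbar is the MKPK of every agent at every time ≥ t₁
  have hmk : ∀ b : A, ∀ t, t₁ ≤ t → IsMKPK I b σ t φbar := by
    intro b t ht
    refine ⟨hstab b t ht, ?_⟩
    intro φ' hK'
    have hEk : Ek I (PrimForm.sat I φ') σ t := hK' σ hσ t ((I.R_equiv b).refl _)
    have hKa : Kn I a (PrimForm.sat I φ') σ t := hEk a
    obtain ⟨φ'', hred, hK''⟩ := hTsub t ⟨φ', rfl, hKa⟩
    rw [sat_eq_of_red_eq I hred] at hK''
    exact fun σ'' _ t'' h => hstrong φ' hK'' σ'' t'' h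
  refine ⟨f φbar, fun b t => ⟨max t t₁, le_max_left _ _, ?_⟩⟩
  rintro ⟨u, hu, hcu⟩
  exact hcu (hlc σ hσ u b φbar (hmk b u ((le_max_right t t₁).trans hu)))
end

section
/- Let ℐ be an interpreted system, f a value selection strategy, and suppose agents choose only as prescribed by f: for all σ ∈ Σ, t ∈ ℕ, a ∈ 𝒜, v ∈ 𝕍, if (ℐ,σ,t) ⊨ choose_a(v) then the current mutually-known primitive knowledge φ*_{(a,σ,t)} exists and v = f(φ*_{(a,σ,t)}). Then ℐ satisfies Validity: ℐ ⊨ ⋀_{a ∈ 𝒜, v ∈ 𝕍} (choose_a(v) → K_a ⋁_{b ∈ 𝒜} init_b(v)). -/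
variable {A V G : Type}

/-- If agents only choose values prescribed by a value selection
strategy `f` applied to their current mutually-known primitive knowledge, then
Validity holds: `ℐ ⊨ ⋀_{a,v} (choose_a(v) → K_a ⋁_{b} init_b(v))`. -/
theorem validity_from_strategy_choices
    {A V G : Type} [Fintype A] [Nonempty A] [Fintype V] [Nonempty V]
    (I : IntSystem A V G) (f : PrimForm A V → V)
    (hf : ValueStrategy I f)
    (hch : ∀ σ ∈ I.Runs, ∀ (t : ℕ) (a : A) (v : V), chooseP I a v σ t →
      ∃ φs : PrimForm A V, IsMKPK I a σ t φs ∧ v = f φs) :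
    Valid I (fun σ t => ∀ (a : A) (v : V), chooseP I a v σ t →
      Kn I a (fun σ' t' => ∃ b : A, initP I b v σ' t') σ t) := by
  intro σ hσ t a v hc σ' hσ' t' hR
  obtain ⟨φs, ⟨hK, _⟩, rfl⟩ := hch σ hσ t a v hc
  have hE : Ek I (PrimForm.sat I φs) σ' t' := hK σ' hσ' t' hR
  have hsat : PrimForm.sat I φs σ' t' :=
    hE a σ' hσ' t' ((I.R_equiv a).refl _)
  exact hf φs σ' hσ' t' hsat
end

section
/- Let ℐ be an interpreted system satisfying local state introspection. Then for every agent a ∈ 𝒜, run σ ∈ Σ, and time t ∈ ℕ, there exists a current primitive knowledge formula φ̄_{(a,σ,t)} ∈ Φ (i.e., (ℐ,σ,t) ⊨ K_a φ̄_{(a,σ,t)} and for every φ' ∈ Φ with (ℐ,σ,t) ⊨ K_a φ', the implication φ̄_{(a,σ,t)} → φ' is valid in ℐ); moreover any two formulas satisfying this defining property are logically equivalent in ℐ (each implies the other, validly in ℐ). -/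
variable {A V G : Type}

/-- Under local state introspection, the current primitive knowledge
`φ̄_{(a,σ,t)}` exists for every agent, run, and time, and is unique up to logical
equivalence valid in `ℐ`. -/
theorem current_primitive_knowledge_exists_and_unique
    {A V G : Type} [Fintype A] [Nonempty A] [Fintype V] [Nonempty V]
    (I : IntSystem A V G)
    (hstable : InputStable I)
    (hli : LocalIntrospection I) :
    ∀ (a : A), ∀ σ ∈ I.Runs, ∀ t : ℕ,
      (∃ φ : PrimForm A V, IsCPK I a σ t φ) ∧
      (∀ φ₁ φ₂ : PrimForm A V, IsCPK I a σ t φ₁ → IsCPK I a σ t φ₂ →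
        ValidIff I φ₁ φ₂) := by

  classical
  intro a σ hσ t
  -- Key fact: known values are unique at (σ,t)
  have huniq : ∀ (b : A) (v w : V),
      Kn I a (initP I b v) σ t → Kn I a (initP I b w) σ t → v = w := by
    intro b v w hv hw
    have hrefl := (I.R_equiv a).refl (σ t)
    have hv' := hv σ hσ t hrefl
    have hw' := hw σ hσ t hrefl
    obtain ⟨u, hu, huu⟩ := hli.2 σ hσ t b
    by_contra hne
    rcases eq_or_ne v u with rfl | hvu
    · exact huu w (fun h => hne h.symm) hw'
    · exact huu v hvu hv'
  -- the domain of the strongest formula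
  set D : Finset A := Finset.univ.filter
    (fun b => ∃ v : V, Kn I a (initP I b v) σ t) with hD
  have hvalex : ∀ b ∈ D, ∃ v : V, Kn I a (initP I b v) σ t := by
    intro b hb
    exact (Finset.mem_filter.mp hb).2
  set f : A → V := fun b =>
    if h : ∃ v : V, Kn I a (initP I b v) σ t then h.choose
    else Classical.arbitrary V with hf
  have hfK : ∀ b ∈ D, Kn I a (initP I b (f b)) σ t := by
    intro b hb
    have h := hvalex b hb
    simp only [hf, dif_pos h]
    exact h.choose_spec
  -- a itself is in D
  have haD : a ∈ D := by
    obtain ⟨v, hv, _⟩ := hli.2 σ hσ t a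
    have := hli.1 σ hσ t a v hv
    exact Finset.mem_filter.mpr ⟨Finset.mem_univ a, ⟨v, this⟩⟩
  set φ : PrimForm A V := ⟨D, ⟨a, haD⟩, f⟩ with hφ
  have hKφ : Kn I a (PrimForm.sat I φ) σ t := by
    intro σ' hσ' t' hR b hb
    exact hfK b hb σ' hσ' t' hR
  have hmax : ∀ φ' : PrimForm A V,
      Kn I a (PrimForm.sat I φ') σ t → ValidImp I φ φ' := by
    intro φ' hK'
    -- for each b in φ'.dom, a knows init_b(φ'.val b)
    have hKb : ∀ b ∈ φ'.dom, Kn I a (initP I b (φ'.val b)) σ t := by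
      intro b hb σ' hσ' t' hR
      exact hK' σ' hσ' t' hR b hb
    have hsub : ∀ b ∈ φ'.dom, b ∈ D ∧ f b = φ'.val b := by
      intro b hb
      have hbD : b ∈ D :=
        Finset.mem_filter.mpr ⟨Finset.mem_univ b, ⟨_, hKb b hb⟩⟩
      exact ⟨hbD, huniq b (f b) (φ'.val b) (hfK b hbD) (hKb b hb)⟩
    intro σ' hσ' t' hsat b hb
    rw [← (hsub b hb).2]
    exact hsat b (hsub b hb).1
  refine ⟨⟨φ, hKφ, hmax⟩, ?_⟩
  intro φ₁ φ₂ h₁ h₂ σ' hσ' t'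
  exact ⟨fun h => h₁.2 φ₂ h₂.1 σ' hσ' t' h, fun h => h₂.2 φ₁ h₁.1 σ' hσ' t' h⟩
end

section
/- Let ℐ be an interpreted system, a ∈ 𝒜, σ ∈ Σ, t ∈ ℕ, and suppose the set 𝕍_{(a,σ,t)} := { init_b(v) : b ∈ 𝒜, v ∈ 𝕍, (ℐ,σ,t) ⊨ K_a init_b(v) } is nonempty. Then the conjunction ⋀_{ψ ∈ 𝕍_{(a,σ,t)}} ψ satisfies the defining property of the current primitive knowledge φ̄_{(a,σ,t)}: (ℐ,σ,t) ⊨ K_a ⋀_{ψ ∈ 𝕍_{(a,σ,t)}} ψ, and for every φ' ∈ Φ with (ℐ,σ,t) ⊨ K_a φ', the implication (⋀_{ψ ∈ 𝕍_{(a,σ,t)}} ψ) → φ' is valid in ℐ. -/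
variable {A V G : Type}

/-- If `𝕍_{(a,σ,t)} = { init_b(v) : (ℐ,σ,t) ⊨ K_a init_b(v) }` is
nonempty, then its conjunction satisfies the defining property of the current
primitive knowledge `φ̄_{(a,σ,t)}`. -/
theorem conjunction_is_current_primitive_knowledge
    {A V G : Type} [Fintype A] [Nonempty A] [Fintype V] [Nonempty V]
    (I : IntSystem A V G)
    (hstable : InputStable I)
    (a : A) (σ : ℕ → G) (hσ : σ ∈ I.Runs) (t : ℕ)
    (S : Set (A × V))
    (hS : S = {p : A × V | Kn I a (initP I p.1 p.2) σ t})
    (hne : S.Nonempty) :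
    Kn I a (conjSat I S) σ t ∧
    ∀ φ' : PrimForm A V, Kn I a (PrimForm.sat I φ') σ t →
      Valid I (fun σ' t' => conjSat I S σ' t' → PrimForm.sat I φ' σ' t') := by
  subst hS
  constructor
  · intro σ' hσ' t' hR p hp
    exact hp σ' hσ' t' hR
  · intro φ' hK σ' _ t' hconj b hb
    have : Kn I a (initP I b (φ'.val b)) σ t := fun σ'' h t'' hR =>
      hK σ'' h t'' hR b hb
    exact hconj (b, φ'.val b) this
end

section
/- Let ℐ be an interpreted system satisfying local state introspection and perfect input recall, and let a ∈ 𝒜, σ ∈ Σ. Define 𝕍_{(a,σ)} := { init_b(v) : b ∈ 𝒜, v ∈ 𝕍, ∃ t ∈ ℕ, (ℐ,σ,t) ⊨ K_a init_b(v) }. Then 𝕍_{(a,σ)} is nonempty and the conjunction ⋀_{ψ ∈ 𝕍_{(a,σ)}} ψ satisfies the defining property of the primitive knowledge limit φ̄_{(a,σ)}: (ℐ,σ) ⊨ ◇ K_a ⋀_{ψ ∈ 𝕍_{(a,σ)}} ψ, and for every φ' ∈ Φ such that (ℐ,σ,t) ⊨ K_a φ' for some t, the implication (⋀_{ψ ∈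 𝕍_{(a,σ)}} ψ) → φ' is valid in ℐ. -/
variable {A V G : Type}

/-- Under local state introspection and perfect input recall,
`𝕍_{(a,σ)} = { init_b(v) : ∃ t, (ℐ,σ,t) ⊨ K_a init_b(v) }` is nonempty and its
conjunction satisfies the defining property of the primitive knowledge limit
`φ̄_{(a,σ)}`. -/
theorem conjunction_is_primitive_knowledge_limit
    {A V G : Type} [Fintype A] [Nonempty A] [Fintype V] [Nonempty V]
    (I : IntSystem A V G)
    (hstable : InputStable I)
    (hli : LocalIntrospection I)
    (hpr : PerfectRecall I)
    (a : A) (σ : ℕ → G) (hσ : σ ∈ I.Runs)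
    (S : Set (A × V))
    (hS : S = {p : A × V | ∃ t : ℕ, Kn I a (initP I p.1 p.2) σ t}) :
    S.Nonempty ∧
    ValidAt σ (Diam (Kn I a (conjSat I S))) ∧
    ∀ φ' : PrimForm A V, (∃ t : ℕ, Kn I a (PrimForm.sat I φ') σ t) →
      Valid I (fun σ' t' => conjSat I S σ' t' → PrimForm.sat I φ' σ' t') := by
  classical
  subst hS
  -- persistence of knowledge of atoms
  have hpers : ∀ (b : A) (v : V) (t : ℕ), Kn I a (initP I b v) σ t →
      ∀ t' : ℕ, t ≤ t' → Kn I a (initP I b v) σ t' := by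
    intro b v t hK t' ht'
    set φ : PrimForm A V := ⟨{b}, ⟨b, Finset.mem_singleton_self b⟩, fun _ => v⟩ with hφ
    have hKφ : Kn I a (PrimForm.sat I φ) σ t := by
      intro σ' hσ' t'' hR c hc
      have hcb : c = b := Finset.mem_singleton.mp hc
      subst hcb
      exact hK σ' hσ' t'' hR
    have hbox := hpr σ hσ t a φ hKφ
    simp only [Box, Diam, not_exists] at hbox
    have hKφ' : Kn I a (PrimForm.sat I φ) σ t' := by
      by_contra h
      exact hbox t' ⟨ht', h⟩
    intro σ' hσ' t'' hR
    exact hKφ' σ' hσ' t'' hR b (Finset.mem_singleton_self b)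
  refine ⟨?_, ?_, ?_⟩
  · obtain ⟨v, hv, -⟩ := hli.2 σ hσ 0 a
    exact ⟨(a, v), 0, hli.1 σ hσ 0 a v hv⟩
  · -- eventually knowing the whole conjunction
    set t_of : A × V → ℕ := fun p =>
      if h : ∃ s : ℕ, Kn I a (initP I p.1 p.2) σ s then h.choose else 0 with ht_of
    have hKt : ∀ p : A × V, (∃ s : ℕ, Kn I a (initP I p.1 p.2) σ s) →
        Kn I a (initP I p.1 p.2) σ (t_of p) := by
      intro p hp
      simp only [ht_of, dif_pos hp]
      exact hp.choose_spec
    set T : ℕ := Finset.univ.sup t_of with hT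
    intro t
    refine ⟨max t T, le_max_left _ _, ?_⟩
    intro σ' hσ' t'' hR p hp
    have hKp := hpers p.1 p.2 (t_of p) (hKt p hp) (max t T)
      (le_trans (Finset.le_sup (Finset.mem_univ p)) (le_max_right _ _))
    exact hKp σ' hσ' t'' hR
  · rintro φ' ⟨t, hK⟩ σ' hσ' t' hconj c hc
    have hmem : (c, φ'.val c) ∈ {p : A × V | ∃ t : ℕ, Kn I a (initP I p.1 p.2) σ t} :=
      ⟨t, fun σ'' hσ'' t'' hR => hK σ'' hσ'' t'' hR c hc⟩
    exact hconj (c, φ'.val c) hmem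
end

section
/- Let ℐ be an interpreted system, a ∈ 𝒜, σ ∈ Σ, t ∈ ℕ, and suppose (ℐ,σ,t) ⊨ K_a E φ for some φ ∈ Φ. Then with 𝕍*_{(a,σ,t)} := { init_b(v) : b ∈ 𝒜, v ∈ 𝕍, (ℐ,σ,t) ⊨ K_a E init_b(v) }, the conjunction ⋀_{ψ ∈ 𝕍*_{(a,σ,t)}} ψ satisfies the defining property of the current mutually-known primitive knowledge φ*_{(a,σ,t)}: (ℐ,σ,t) ⊨ K_a E ⋀_{ψ ∈ 𝕍*_{(a,σ,t)}} ψ, and for every φ' ∈ Φ with (ℐ,σ,t) ⊨ K_a E φ', the implication (⋀_{ψ ∈ 𝕍*_{(a,σ,t)}} ψ) → φ' is valid in ℐ. -/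
variable {A V G : Type}

/-- If `(ℐ,σ,t) ⊨ K_a E φ` for some `φ ∈ Φ`, then the conjunction of
`𝕍*_{(a,σ,t)} = { init_b(v) : (ℐ,σ,t) ⊨ K_a E init_b(v) }` satisfies the defining
property of the current mutually-known primitive knowledge `φ*_{(a,σ,t)}`. -/
theorem conjunction_is_current_mutually_known_knowledge
    {A V G : Type} [Fintype A] [Nonempty A] [Fintype V] [Nonempty V]
    (I : IntSystem A V G)
    (hstable : InputStable I)
    (a : A) (σ : ℕ → G) (hσ : σ ∈ I.Runs) (t : ℕ)
    (hKE : ∃ φ : PrimForm A V, Kn I a (Ek I (PrimForm.sat I φ)) σ t)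
    (S : Set (A × V))
    (hS : S = {p : A × V | Kn I a (Ek I (initP I p.1 p.2)) σ t}) :
    Kn I a (Ek I (conjSat I S)) σ t ∧
    ∀ φ' : PrimForm A V, Kn I a (Ek I (PrimForm.sat I φ')) σ t →
      Valid I (fun σ' t' => conjSat I S σ' t' → PrimForm.sat I φ' σ' t') := by
  subst hS
  constructor
  · intro σ' hσ' t' hR b σ'' hσ'' t'' hR' p hp
    exact hp σ' hσ' t' hR b σ'' hσ'' t'' hR'
  · intro φ' hφ' σ'' hσ'' t'' hconj b hb
    exact hconj (b, φ'.val b)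
      (fun σ' h1 t' h2 c σ3 h3 t3 h4 => hφ' σ' h1 t' h2 c σ3 h3 t3 h4 b hb)
end

section
/- Let ℐ be an interpreted system satisfying second-depth knowledge stability, let a ∈ 𝒜, σ ∈ Σ, and suppose (ℐ,σ,t₀) ⊨ K_a E φ for some φ ∈ Φ and some t₀ ∈ ℕ. Then with 𝕍*_{(a,σ)} := { init_b(v) : b ∈ 𝒜, v ∈ 𝕍, ∃ t ∈ ℕ, (ℐ,σ,t) ⊨ K_a E init_b(v) }, the conjunction ⋀_{ψ ∈ 𝕍*_{(a,σ)}} ψ satisfies the defining property of the mutually-known primitive knowledge limit φ*_{(a,σ)}: (ℐ,σ) ⊨ ◇ K_a E ⋀_{ψ ∈ 𝕍*_{(a,σ)}} ψ, and for every φ' ∈ Φ such that (ℐ,σ,t) ⊨ K_a E φ' for some t, the implication (⋀_{ψ ∈ 𝕍*_{(a,σ)}} ψ) → φ' is valid in ℐ. -/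
variable {A V G : Type}

/-- A singleton primitive form `init_b(v)`. -/
def singPF (b : A) (v : V) : PrimForm A V :=
  ⟨{b}, Finset.singleton_nonempty b, fun _ => v⟩

lemma singPF_sat (I : IntSystem A V G) (b : A) (v : V) :
    PrimForm.sat I (singPF b v) = initP I b v := by
  funext σ t
  simp [PrimForm.sat, singPF, initP]

/-- Under second-depth knowledge stability, if `(ℐ,σ,t₀) ⊨ K_a E φ` for
some `φ ∈ Φ` and some `t₀`, then the conjunction of
`𝕍*_{(a,σ)} = { init_b(v) : ∃ t, (ℐ,σ,t) ⊨ K_a E init_b(v) }` satisfies the defining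
property of the mutually-known primitive knowledge limit `φ*_{(a,σ)}`. -/
theorem conjunction_is_mutually_known_knowledge_limit
    {A V G : Type} [Fintype A] [Nonempty A] [Fintype V] [Nonempty V]
    (I : IntSystem A V G)
    (hstable : InputStable I)
    (hsd : SecondDepthStability I)
    (a : A) (σ : ℕ → G) (hσ : σ ∈ I.Runs)
    (hKE : ∃ (φ : PrimForm A V) (t₀ : ℕ), Kn I a (Ek I (PrimForm.sat I φ)) σ t₀)
    (S : Set (A × V))
    (hS : S = {p : A × V | ∃ t : ℕ, Kn I a (Ek I (initP I p.1 p.2)) σ t}) :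
    ValidAt σ (Diam (Kn I a (Ek I (conjSat I S)))) ∧
    ∀ φ' : PrimForm A V, (∃ t : ℕ, Kn I a (Ek I (PrimForm.sat I φ')) σ t) →
      Valid I (fun σ' t' => conjSat I S σ' t' → PrimForm.sat I φ' σ' t') := by
  classical
  subst hS
  constructor
  · intro t
    have stab : ∀ p : A × V, ∀ t₁, Kn I a (Ek I (initP I p.1 p.2)) σ t₁ →
        ∀ t₂ ≥ t₁, Kn I a (Ek I (initP I p.1 p.2)) σ t₂ := by
      intro p t₁ h t₂ ht₂
      have hb := hsd σ hσ t₁ a (singPF p.1 p.2)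
      rw [singPF_sat] at hb
      have hbox := hb h
      by_contra hcon
      exact hbox ⟨t₂, ht₂, hcon⟩
    choose f hf using fun (p : A × V)
      (hp : p ∈ {p : A × V | ∃ t : ℕ, Kn I a (Ek I (initP I p.1 p.2)) σ t}) => hp
    set T : ℕ := max t (Finset.univ.sup fun p : A × V =>
      if hp : p ∈ {p : A × V | ∃ t : ℕ, Kn I a (Ek I (initP I p.1 p.2)) σ t}
      then f p hp else 0) with hT
    refine ⟨T, le_max_left _ _, ?_⟩
    intro σ' hσ' t' hR b σ'' hσ'' t'' hR' p hp
    have hle : f p hp ≤ T := by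
      refine le_trans ?_ (le_max_right t _)
      have := Finset.le_sup (f := fun p : A × V =>
        if hp : p ∈ {p : A × V | ∃ t : ℕ, Kn I a (Ek I (initP I p.1 p.2)) σ t}
        then f p hp else 0) (Finset.mem_univ p)
      simpa only [dif_pos hp] using this
    exact stab p (f p hp) (hf p hp) T hle σ' hσ' t' hR b σ'' hσ'' t'' hR'
  · rintro φ' ⟨t, hK⟩ σ' hσ' t' hc b hb
    have hmem : Kn I a (Ek I (initP I b (φ'.val b))) σ t := by
      intro σ₁ h₁ t₁ hR c σ₂ h₂ t₂ hR₂
      exact hK σ₁ h₁ t₁ hR c σ₂ h₂ t₂ hR₂ b hb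
    exact hc (b, φ'.val b) ⟨t, hmem⟩
end

section
/- Let ℐ be an interpreted system satisfying local state introspection and perfect input recall, and let a ∈ 𝒜, σ ∈ Σ. Then the primitive knowledge limit φ̄_{(a,σ)} exists, and there exists t₀ ∈ ℕ such that for all t ≥ t₀, the current primitive knowledge φ̄_{(a,σ,t)} exists and φ̄_{(a,σ,t)} ↔ φ̄_{(a,σ)} is valid in ℐ. -/
variable {A V G : Type}

/-- Under local state introspection and perfect input recall, the
primitive knowledge limit `φ̄_{(a,σ)}` exists, and from some time `t₀` on the current
primitive knowledge `φ̄_{(a,σ,t)}` exists and is equivalent (validly in `ℐ`) to it. -/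
theorem primitive_knowledge_limit_exists
    {A V G : Type} [Fintype A] [Nonempty A] [Fintype V] [Nonempty V]
    (I : IntSystem A V G)
    (hstable : InputStable I)
    (hli : LocalIntrospection I)
    (hpr : PerfectRecall I)
    (a : A) (σ : ℕ → G) (hσ : σ ∈ I.Runs) :
    ∃ φlim : PrimForm A V, IsPKLim I a σ φlim ∧
      ∃ t₀ : ℕ, ∀ t ≥ t₀, ∃ φt : PrimForm A V,
        IsCPK I a σ t φt ∧ ValidIff I φt φlim := by
  classical
  obtain ⟨hli1, hli2⟩ := hli
  -- singleton primitive forms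
  set sing : A → V → PrimForm A V := fun b v =>
    ⟨{b}, Finset.singleton_nonempty b, fun _ => v⟩ with hsing
  set Known : ℕ → A → V → Prop := fun t b v =>
    Kn I a (PrimForm.sat I (sing b v)) σ t with hKnown
  have known_iff : ∀ t b v, Known t b v ↔
      ∀ σ' ∈ I.Runs, ∀ t', I.R a (σ t) (σ' t') → σ' t' ∈ I.initV b v := by
    intro t b v
    constructor
    · intro h σ' hσ' t' hr
      exact h σ' hσ' t' hr b (Finset.mem_singleton_self b)
    · intro h σ' hσ' t' hr c hc
      rw [hsing] at hc
      simp only [Finset.mem_singleton] at hc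
      subst hc
      exact h σ' hσ' t' hr
  have mono : ∀ {t t'}, t ≤ t' → ∀ {b v}, Known t b v → Known t' b v := by
    intro t t' htt b v h
    have hbox := hpr σ hσ t a (sing b v) h
    simp only [Box, Diam, not_exists] at hbox
    by_contra hc
    exact (hbox t' ⟨htt, hc⟩)
  have refl : ∀ t, I.R a (σ t) (σ t) := fun t => (I.R_equiv a).refl _
  have self_sat : ∀ {t b v}, Known t b v → σ t ∈ I.initV b v := by
    intro t b v h
    exact (known_iff t b v).1 h σ hσ t (refl t)
  have uniq : ∀ {t b v w}, Known t b v → Known t b w → v = w := by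
    intro t b v w hv hw
    obtain ⟨u, hu, huniq⟩ := hli2 σ hσ t b
    have h1 : v = u := by
      by_contra h; exact huniq v h (self_sat hv)
    have h2 : w = u := by
      by_contra h; exact huniq w h (self_sat hw)
    rw [h1, h2]
  have self_known : ∀ t, ∃ v, Known t a v := by
    intro t
    obtain ⟨v, hv, -⟩ := hli2 σ hσ t a
    refine ⟨v, (known_iff t a v).2 ?_⟩
    intro σ' hσ' t' hr
    exact hli1 σ hσ t a v hv σ' hσ' t' hr
  have conj_iff : ∀ (t : ℕ) (φ : PrimForm A V),
      Kn I a (PrimForm.sat I φ) σ t ↔ ∀ b ∈ φ.dom, Known t b (φ.val b) := by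
    intro t φ
    constructor
    · intro h b hb
      exact (known_iff t b _).2 fun σ' hσ' t' hr => h σ' hσ' t' hr b hb
    · intro h σ' hσ' t' hr b hb
      exact (known_iff t b _).1 (h b hb) σ' hσ' t' hr
  -- the evolving known set
  set S : ℕ → Finset (A × V) := fun t =>
    Finset.univ.filter (fun p => Known t p.1 p.2) with hS
  have memS : ∀ t (p : A × V), p ∈ S t ↔ Known t p.1 p.2 := by
    intro t p; simp [hS]
  have Smono : ∀ {t t'}, t ≤ t' → S t ⊆ S t' := by
    intro t t' h p hp
    exact (memS t' p).2 (mono h ((memS t p).1 hp))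
  -- the form built from the known set at time t
  set dm : ℕ → Finset A := fun t => (S t).image Prod.fst with hdm
  set vl : ℕ → A → V := fun t b =>
    if h : ∃ v, Known t b v then h.choose else Classical.arbitrary V with hvl
  have dm_ne : ∀ t, a ∈ dm t := by
    intro t
    obtain ⟨v, hv⟩ := self_known t
    exact Finset.mem_image.2 ⟨(a, v), (memS t (a, v)).2 hv, rfl⟩
  have known_dm : ∀ t b, b ∈ dm t → Known t b (vl t b) := by
    intro t b hb
    obtain ⟨p, hp, hpb⟩ := Finset.mem_image.1 hb
    have hex : ∃ v, Known t b v := ⟨p.2, by subst hpb; exact (memS t p).1 hp⟩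
    have : vl t b = hex.choose := by rw [hvl]; exact dif_pos hex
    rw [this]
    exact hex.choose_spec
  have mem_dm_of : ∀ t b v, Known t b v → b ∈ dm t ∧ vl t b = v := by
    intro t b v h
    have hb : b ∈ dm t := Finset.mem_image.2 ⟨(b, v), (memS t (b, v)).2 h, rfl⟩
    exact ⟨hb, uniq (known_dm t b hb) h⟩
  set form : ℕ → PrimForm A V := fun t => ⟨dm t, ⟨a, dm_ne t⟩, vl t⟩ with hform
  have cpk : ∀ t, IsCPK I a σ t (form t) := by
    intro t
    constructor
    · exact (conj_iff t (form t)).2 (fun b hb => known_dm t b hb)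
    · intro φ' hφ'
      have hkn := (conj_iff t φ').1 hφ'
      intro σ' hσ' t' hs b hb
      obtain ⟨hbd, hvb⟩ := mem_dm_of t b (φ'.val b) (hkn b hb)
      have h3 : σ' t' ∈ I.initV b (vl t b) := hs b hbd
      rw [hvb] at h3
      exact h3
  -- stabilization of the known set
  set c : ℕ → ℕ := fun t => (S t).card with hc
  have cbd : ∀ t, c t ≤ Fintype.card (A × V) := fun t => Finset.card_le_univ _
  set P : ℕ → Prop := fun n => ∃ t, c t = n with hPdef
  have hP0 : P (c 0) := ⟨0, rfl⟩
  obtain ⟨t₀, ht₀⟩ : P (Nat.findGreatest P (Fintype.card (A × V))) :=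
    Nat.findGreatest_spec (cbd 0) hP0
  have hmax : ∀ t, c t ≤ Nat.findGreatest P (Fintype.card (A × V)) :=
    fun t => Nat.le_findGreatest (cbd t) ⟨t, rfl⟩
  have Sstab : ∀ t, t₀ ≤ t → S t = S t₀ := by
    intro t ht
    refine (Finset.eq_of_subset_of_card_le (Smono ht) ?_).symm
    calc (S t).card = c t := rfl
      _ ≤ Nat.findGreatest P (Fintype.card (A × V)) := hmax t
      _ = c t₀ := ht₀.symm
      _ = (S t₀).card := rfl
  have Kstab : ∀ t, t₀ ≤ t → ∀ b v, Known t b v ↔ Known t₀ b v := by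
    intro t ht b v
    rw [← memS t (b, v), ← memS t₀ (b, v), Sstab t ht]
  refine ⟨form t₀, ⟨?_, ?_⟩, t₀, ?_⟩
  · -- ValidAt σ (Diam (Kn ...))
    intro t
    refine ⟨max t t₀, le_max_left _ _, ?_⟩
    exact (conj_iff _ _).2 fun b hb => mono (le_max_right t t₀) (known_dm t₀ b hb)
  · rintro φ' ⟨t, ht⟩
    have h1 := (conj_iff t φ').1 ht
    have h2 : ∀ b ∈ φ'.dom, Known t₀ b (φ'.val b) := by
      intro b hb
      exact (Kstab (max t t₀) (le_max_right t t₀) b _).1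
        (mono (le_max_left t t₀) (h1 b hb))
    intro σ' hσ' t' hs b hb
    obtain ⟨hbd, hvb⟩ := mem_dm_of t₀ b _ (h2 b hb)
    rw [← hvb]
    exact hs b hbd
  · intro t ht
    refine ⟨form t, cpk t, ?_⟩
    have k1 : Kn I a (PrimForm.sat I (form t₀)) σ t :=
      (conj_iff _ _).2 fun b hb => mono ht (known_dm t₀ b hb)
    have k2 : Kn I a (PrimForm.sat I (form t)) σ t₀ :=
      (conj_iff _ _).2 fun b hb => (Kstab t ht b _).1 (known_dm t b hb)
    have i1 := (cpk t).2 _ k1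
    have i2 := (cpk t₀).2 _ k2
    intro σ' hσ' t'
    exact ⟨fun h => i1 σ' hσ' t' h, fun h => i2 σ' hσ' t' h⟩
end

section
/- Let ℐ be an interpreted system satisfying local state introspection, perfect input recall, and second-depth knowledge stability. Let σ ∈ Σ and let a ∈ 𝒜 be an agent satisfying the broadcaster property in σ: for every φ ∈ Φ, (ℐ,σ) ⊨ K_a φ → ◇ E E φ. Then there exists t₂ ∈ ℕ such that for every t' ≥ t₂ and every agent b ∈ 𝒜, the current mutually-known primitive knowledge φ*_{(b,σ,t')} exists and the biconditional φ̄_{(a,σ)} ↔ φ*_{(b,σ,t')} is valid in ℐ, where φ̄_{(a,σ)} is the primitive knowledge limit of a at σ. -/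
variable {A V G : Type}

/-- Under local state introspection, perfect input recall, and
second-depth knowledge stability: if agent `a` is a broadcaster in run `σ`
(`(ℐ,σ) ⊨ K_a φ → ◇ E E φ` for all `φ ∈ Φ`), then there exists `t₂` such that for
all `t' ≥ t₂` and every agent `b`, the current mutually-known primitive knowledge
`φ*_{(b,σ,t')}` exists and `φ̄_{(a,σ)} ↔ φ*_{(b,σ,t')}` is valid in `ℐ`. -/
theorem broadcaster_limit_equals_mutually_known
    {A V G : Type} [Fintype A] [Nonempty A] [Fintype V] [Nonempty V]
    (I : IntSystem A V G)
    (hstable : InputStable I)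
    (hli : LocalIntrospection I)
    (hpr : PerfectRecall I)
    (hsd : SecondDepthStability I)
    (σ : ℕ → G) (hσ : σ ∈ I.Runs) (a : A)
    (ha : ∀ φ : PrimForm A V, ValidAt σ (fun σ' u =>
      Kn I a (PrimForm.sat I φ) σ' u → Diam (Ek I (Ek I (PrimForm.sat I φ))) σ' u))
    (φlim : PrimForm A V) (hlim : IsPKLim I a σ φlim) :
    ∃ t₂ : ℕ, ∀ t' ≥ t₂, ∀ b : A, ∃ φs : PrimForm A V,
      IsMKPK I b σ t' φs ∧ ValidIff I φlim φs := by
  obtain ⟨t0, -, hK⟩ := hlim.1 0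
  obtain ⟨t1, ht1, hEE⟩ := ha φlim t0 hK
  refine ⟨t1, fun t' ht' b => ?_⟩
  -- K_b E φlim holds at t1, hence (by stability) at all t' ≥ t1
  have hKbE1 : Kn I b (Ek I (PrimForm.sat I φlim)) σ t1 := hEE b
  have hbox := hsd σ hσ t1 b φlim hKbE1
  have hKbE : Kn I b (Ek I (PrimForm.sat I φlim)) σ t' := by
    by_contra h
    exact hbox ⟨t', ht', h⟩
  refine ⟨φlim, ⟨hKbE, fun φ' hφ' => ?_⟩, fun σ' _ t => Iff.rfl⟩
  -- from K_b E φ' at (σ,t') get K_a φ' at (σ,t')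
  have hE : Ek I (PrimForm.sat I φ') σ t' :=
    hφ' σ hσ t' ((I.R_equiv b).refl _)
  exact hlim.2 φ' ⟨t', hE a⟩
end
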